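/- Let H be a graph on k vertices with an isolated vertex, and H' = H plus a dominating vertex. If wt(H) > k − 2 (or H has no edges), then sat(H', n) ≤ ((k−1)/2)·n for all n ≥ k + 1, and hence lim_{n→∞} sat(H', n)/n = (k−1)/2. -/

import Mathlib

open SimpleGraph

/-- `H` has a copy in `G`: an injective graph homomorphism (i.e. a subgraph isomorphic to `H`). -/
def hasCopy {α β : Type*} (H : SimpleGraph α) (G : SimpleGraph β) : Prop :=
  ∃ f : H →g G, Function.Injective f

/-- `G` is `H`-saturated: `H`-free, and adding any missing edge creates a copy of `H`. -/
def isSat {α β : Type*} (H : SimpleGraph α) (G : SimpleGraph β) : Prop :=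
  ¬ hasCopy H G ∧ ∀ x y : β, x ≠ y → ¬ G.Adj x y →
    hasCopy H (G ⊔ SimpleGraph.fromEdgeSet {s(x, y)})

/-- The weight of an edge `uv`: with `deg u ≤ deg v`,
`wt(uv) = 2|N(u) ∩ N(v)| + |N(v) \ N(u)|`. -/
noncomputable def edgeWt {α : Type*} (H : SimpleGraph α) (u v : α) : ℕ :=
  if (H.neighborSet u).ncard ≤ (H.neighborSet v).ncard then
    2 * (H.neighborSet u ∩ H.neighborSet v).ncard + ((H.neighborSet v) \ (H.neighborSet u)).ncard
  else
    2 * (H.neighborSet u ∩ H.neighborSet v).ncard + ((H.neighborSet u) \ (H.neighborSet v)).ncard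

/-- The weight of a graph: the minimum weight of an edge. -/
noncomputable def graphWt {α : Type*} (H : SimpleGraph α) : ℕ :=
  sInf {w | ∃ u v, H.Adj u v ∧ w = edgeWt H u v}

/-- The saturation number: minimum number of edges of an `H`-saturated graph on `n` vertices. -/
noncomputable def satNum {α : Type*} (H : SimpleGraph α) (n : ℕ) : ℕ :=
  sInf {m | ∃ G : SimpleGraph (Fin n), isSat H G ∧ Nat.card G.edgeSet = m}

/-- The graph obtained from `H` by adding a dominating vertex (`none`). -/
def addDom {α : Type*} (H : SimpleGraph α) : SimpleGraph (Option α) :=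
  SimpleGraph.fromRel (fun x y => x = none ∨ ∃ u v, x = some u ∧ y = some v ∧ H.Adj u v)

/-!
Upper bound: split the `n` vertices into cliques of order `k = |H|` (the last one possibly
smaller). No clique holds the `k + 1` vertices of `H'`, whose dominating vertex forces a copy into
a single clique; but joining a vertex `x` of a full clique to a vertex `y` outside it creates `H'`,
with the dominating vertex at `x`, the isolated vertex at `y` and the rest of `H` in the clique.
All degrees are at most `k - 1`.

Lower bound: writing `wt(ab) = |N(a) ∩ N(b)| + max(deg a, deg b)`, every edge of `H'` has weight
at least `k`: at the dominating vertex because it has degree `k`, elsewhere because the weight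
exceeds the one in `H` by `2`. If `xy` is a non-edge of an `H'`-saturated graph `G`, the copy of
`H'` created by adding `xy` uses it as an edge `ab`, and the rest of the copy embeds the
neighbourhoods of `a` and `b` into those of `x` and `y`, so
`k ≤ max(deg x, deg y) + 1 + |N(x) ∩ N(y)|`. Unless `δ(G) ≥ k - 1`, take `x` of minimum degree
and sum over its non-neighbours `y`: every codegree term is charged to the degree of a neighbour
of `x`, which gives `(k - 1)(n - deg x - 1) ≤ 2 e(G)`. Hence `sat(H', n) = (k - 1) n / 2 - O(1)`.
-/

open Finset

lemma edgeWt_eq_ncard_inter_add_max {α : Type*} [Finite α] (H : SimpleGraph α) (a b : α) :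
    edgeWt H a b = (H.neighborSet a ∩ H.neighborSet b).ncard +
      max (H.neighborSet a).ncard (H.neighborSet b).ncard := by
  have hab := Set.ncard_inter_add_ncard_sdiff_eq_ncard (H.neighborSet a) (H.neighborSet b)
  have hba := Set.ncard_inter_add_ncard_sdiff_eq_ncard (H.neighborSet b) (H.neighborSet a)
  rw [Set.inter_comm] at hba
  unfold edgeWt
  split_ifs <;> omega

lemma edgeWt_comm {α : Type*} [Finite α] (H : SimpleGraph α) (a b : α) :
    edgeWt H a b = edgeWt H b a := by
  rw [edgeWt_eq_ncard_inter_add_max, edgeWt_eq_ncard_inter_add_max, Set.inter_comm, max_comm]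

section addDom

variable {α : Type*} (H : SimpleGraph α)

@[simp]
lemma addDom_adj_none_some (w : α) : (addDom H).Adj none (some w) := by
  simp [addDom]

@[simp]
lemma addDom_adj_some_some (a b : α) : (addDom H).Adj (some a) (some b) ↔ H.Adj a b := by
  simpa [addDom, H.adj_comm b a] using H.ne_of_adj

lemma neighborSet_addDom_none : (addDom H).neighborSet none = Set.range some := by
  ext (_ | w) <;> simp

lemma neighborSet_addDom_some (a : α) :
    (addDom H).neighborSet (some a) = insert none (some '' H.neighborSet a) := by
  ext (_ | w) <;> simp [(addDom_adj_none_some H a).symm]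

section Finite

variable [Finite α]

lemma ncard_neighborSet_addDom_some (a : α) :
    ((addDom H).neighborSet (some a)).ncard = (H.neighborSet a).ncard + 1 := by
  rw [neighborSet_addDom_some, Set.ncard_insert_of_notMem (by simp),
    Set.ncard_image_of_injective _ (Option.some_injective α)]

lemma edgeWt_addDom_some_some (a b : α) :
    edgeWt (addDom H) (some a) (some b) = edgeWt H a b + 2 := by
  have hinter : (addDom H).neighborSet (some a) ∩ (addDom H).neighborSet (some b) =
      insert none (some '' (H.neighborSet a ∩ H.neighborSet b)) := by
    rw [neighborSet_addDom_some, neighborSet_addDom_some,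
      Set.image_inter (Option.some_injective α), Set.insert_inter_distrib]
  rw [edgeWt_eq_ncard_inter_add_max, edgeWt_eq_ncard_inter_add_max, hinter,
    ncard_neighborSet_addDom_some, ncard_neighborSet_addDom_some,
    Set.ncard_insert_of_notMem (by simp), Set.ncard_image_of_injective _ (Option.some_injective α)]
  omega

end Finite

variable [Fintype α]

lemma card_le_edgeWt_addDom_none (w : α) :
    Fintype.card α ≤ edgeWt (addDom H) none (some w) := by
  have hnone : ((addDom H).neighborSet none).ncard = Fintype.card α := by
    rw [neighborSet_addDom_none, ← Set.image_univ,
      Set.ncard_image_of_injective _ (Option.some_injective α), Set.ncard_univ,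
      Nat.card_eq_fintype_card]
  rw [edgeWt_eq_ncard_inter_add_max, hnone]
  omega

lemma card_le_edgeWt_addDom (hH : ∀ a b, H.Adj a b → Fintype.card α ≤ edgeWt H a b + 2)
    {x y : Option α} (hxy : (addDom H).Adj x y) : Fintype.card α ≤ edgeWt (addDom H) x y := by
  rcases x with _ | a <;> rcases y with _ | b
  · exact absurd hxy (SimpleGraph.irrefl _)
  · exact card_le_edgeWt_addDom_none H b
  · rw [edgeWt_comm]; exact card_le_edgeWt_addDom_none H a
  · rw [edgeWt_addDom_some_some]
    exact hH a b ((addDom_adj_some_some H a b).mp hxy)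

end addDom

section saturation

variable {β V : Type*} {F : SimpleGraph β} {G : SimpleGraph V} {x y : V}

lemma adj_of_sup_edge_adj {p q : V} (h : (G ⊔ edge x y).Adj p q) (hpq : s(p, q) ≠ s(x, y)) :
    G.Adj p q := by
  rcases h with h | h
  · exact h
  · exact absurd ((adj_edge _ _).mp h).1.symm hpq

lemma exists_adj_map_eq_of_not_hasCopy {f : F →g G ⊔ edge x y} (hf : Function.Injective f)
    (hfree : ¬ hasCopy F G) : ∃ a b, F.Adj a b ∧ f a = x ∧ f b = y := by
  by_contra! hne
  refine hfree ⟨⟨f, fun {a b} hab => adj_of_sup_edge_adj (f.map_adj hab) ?_⟩, hf⟩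
  rw [Ne, Sym2.eq_iff]
  rintro (⟨ha, hb⟩ | ⟨ha, hb⟩)
  · exact hne a b hab ha hb
  · exact hne b a hab.symm hb ha

lemma adj_map_of_map_eq_edge {f : F →g G ⊔ edge x y} (hf : Function.Injective f) {a b c : β}
    (hab : s(f a, f b) = s(x, y)) (hac : F.Adj a c) (hcb : c ≠ b) : G.Adj (f a) (f c) := by
  refine adj_of_sup_edge_adj (f.map_adj hac) fun h => hcb (hf ?_)
  rw [← hab, Sym2.congr_right] at h
  exact h

variable [Finite V]

lemma ncard_neighborSet_le_of_map_eq_edge [Finite β] {f : F →g G ⊔ edge x y}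
    (hf : Function.Injective f) {a b : β} (hadj : F.Adj a b) (hab : s(f a, f b) = s(x, y)) :
    (F.neighborSet a).ncard ≤ (G.neighborSet (f a)).ncard + 1 := by
  have hmaps : (F.neighborSet a \ {b}).ncard ≤ (G.neighborSet (f a)).ncard :=
    Set.ncard_le_ncard_of_injOn f (fun c ⟨hac, hcb⟩ => adj_map_of_map_eq_edge hf hab hac hcb)
      hf.injOn
  have := Set.ncard_sdiff_singleton_add_one (s := F.neighborSet a) hadj
  omega

lemma ncard_inter_neighborSet_le_of_map_eq_edge {f : F →g G ⊔ edge x y}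
    (hf : Function.Injective f) {a b : β} (hab : s(f a, f b) = s(x, y)) :
    (F.neighborSet a ∩ F.neighborSet b).ncard ≤
      (G.neighborSet (f a) ∩ G.neighborSet (f b)).ncard := by
  rw [Sym2.eq_swap] at hab
  refine Set.ncard_le_ncard_of_injOn f (fun c ⟨hac, hbc⟩ => ⟨?_, ?_⟩) hf.injOn
  · exact adj_map_of_map_eq_edge hf (Sym2.eq_swap.trans hab) hac (hbc.ne.symm)
  · exact adj_map_of_map_eq_edge hf hab hbc hac.ne.symm

lemma exists_edgeWt_le_of_isSat [Finite β] (hsat : isSat F G) (hxy : x ≠ y)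
    (hnadj : ¬ G.Adj x y) :
    ∃ a b, F.Adj a b ∧ edgeWt F a b ≤
      max (G.neighborSet x).ncard (G.neighborSet y).ncard + 1 +
        (G.neighborSet x ∩ G.neighborSet y).ncard := by
  obtain ⟨f, hf⟩ : hasCopy F (G ⊔ edge x y) := hsat.2 x y hxy hnadj
  obtain ⟨a, b, hadj, hfa, hfb⟩ := exists_adj_map_eq_of_not_hasCopy hf hsat.1
  have hab : s(f a, f b) = s(x, y) := by rw [hfa, hfb]
  have hda := ncard_neighborSet_le_of_map_eq_edge hf hadj hab
  have hdb := ncard_neighborSet_le_of_map_eq_edge hf hadj.symm (Sym2.eq_swap.trans hab)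
  have hcodeg := ncard_inter_neighborSet_le_of_map_eq_edge hf hab
  refine ⟨a, b, hadj, ?_⟩
  rw [edgeWt_eq_ncard_inter_add_max]
  simp only [hfa, hfb] at hda hdb hcodeg
  omega

end saturation

section counting

variable {V : Type*} [Fintype V] [DecidableEq V] {G : SimpleGraph V} [DecidableRel G.Adj]

lemma sum_card_inter_neighborFinset_le (s t : Finset V) :
    ∑ z ∈ s, #(t ∩ G.neighborFinset z) ≤ ∑ w ∈ t, G.degree w :=
  calc ∑ z ∈ s, #(t ∩ G.neighborFinset z) = ∑ z ∈ s, #(t.bipartiteBelow G.Adj z) := by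
        congr! 2 with z; ext w; simp [bipartiteBelow, adj_comm]
    _ = ∑ w ∈ t, #(s.bipartiteAbove G.Adj w) :=
        (sum_card_bipartiteAbove_eq_sum_card_bipartiteBelow G.Adj).symm
    _ ≤ ∑ w ∈ t, G.degree w :=
        sum_le_sum fun w _ => card_le_card fun z hz =>
          (G.mem_neighborFinset w z).mpr (mem_filter.mp hz).2

lemma sub_one_mul_le_two_mul_card_edgeFinset_of_nonadj (x : V) {k : ℕ}
    (h : ∀ z, z ≠ x → ¬ G.Adj x z →
      k ≤ G.degree z + 1 + #(G.neighborFinset x ∩ G.neighborFinset z)) :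
    (k - 1) * (Fintype.card V - G.degree x - 1) ≤ 2 * #G.edgeFinset := by
  set S := (G.neighborFinset x)ᶜ.erase x
  have hS : #S = Fintype.card V - G.degree x - 1 := by
    rw [card_erase_of_mem (by simp), card_compl, card_neighborFinset_eq_degree]
  have hdisj : Disjoint S (G.neighborFinset x) :=
    disjoint_left.mpr fun z hz => (mem_compl.mp (mem_of_mem_erase hz))
  rw [← hS, ← sum_degrees_eq_twice_card_edges, mul_comm, ← smul_eq_mul]
  calc #S • (k - 1)
        ≤ ∑ z ∈ S, (G.degree z + #(G.neighborFinset x ∩ G.neighborFinset z)) :=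
        card_nsmul_le_sum _ _ _ fun z hz => by
          have := h z (ne_of_mem_erase hz) (by simpa using mem_of_mem_erase hz)
          omega
    _ ≤ ∑ z ∈ S, G.degree z + ∑ w ∈ G.neighborFinset x, G.degree w := by
        rw [sum_add_distrib]
        exact add_le_add le_rfl (sum_card_inter_neighborFinset_le _ _)
    _ = ∑ z ∈ S ∪ G.neighborFinset x, G.degree z := (sum_union hdisj).symm
    _ ≤ ∑ z, G.degree z := sum_le_sum_of_subset (subset_univ _)

lemma sub_one_mul_card_le_two_mul_card_edgeFinset {k : ℕ}
    (h : ∀ x z, x ≠ z → ¬ G.Adj x z → G.degree x ≤ G.degree z →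
      k ≤ G.degree z + 1 + #(G.neighborFinset x ∩ G.neighborFinset z)) :
    (k - 1) * Fintype.card V ≤ 2 * #G.edgeFinset + (k - 1) ^ 2 := by
  cases isEmpty_or_nonempty V
  · simp
  obtain ⟨x, hx⟩ := G.exists_minimal_degree_vertex
  have hmin : ∀ z, G.degree x ≤ G.degree z := fun z => hx ▸ G.minDegree_le_degree z
  by_cases hdeg : k - 1 ≤ G.degree x
  · have : Fintype.card V • (k - 1) ≤ ∑ z, G.degree z :=
      card_nsmul_le_sum _ _ _ fun z _ => hdeg.trans (hmin z)
    rw [smul_eq_mul, sum_degrees_eq_twice_card_edges, mul_comm] at this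
    exact this.trans (Nat.le_add_right _ _)
  · have hfar := sub_one_mul_le_two_mul_card_edgeFinset_of_nonadj x
      fun z hzx hxz => h x z hzx.symm hxz (hmin z)
    have hx_lt := G.degree_lt_card_verts x
    calc (k - 1) * Fintype.card V
        = (k - 1) * (Fintype.card V - G.degree x - 1) + (k - 1) * (G.degree x + 1) := by
          rw [← mul_add]; congr 1; omega
      _ ≤ 2 * #G.edgeFinset + (k - 1) ^ 2 :=
          add_le_add hfar (by rw [sq]; exact Nat.mul_le_mul_left _ (by omega))

end counting

lemma sub_one_mul_card_le_of_isSat {β V : Type*} [Finite β] [Fintype V] {F : SimpleGraph β}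
    {G : SimpleGraph V} {k : ℕ} (hF : ∀ a b, F.Adj a b → k ≤ edgeWt F a b)
    (hsat : isSat F G) :
    (k - 1) * Fintype.card V ≤ 2 * Nat.card G.edgeSet + (k - 1) ^ 2 := by
  classical
  rw [Nat.card_eq_fintype_card, ← edgeFinset_card]
  refine sub_one_mul_card_le_two_mul_card_edgeFinset fun x z hxz hnadj hdeg => ?_
  obtain ⟨a, b, hab, hwt⟩ := exists_edgeWt_le_of_isSat hsat hxz hnadj
  simp only [← coe_neighborFinset, ← coe_inter, Set.ncard_coe_finset,
    card_neighborFinset_eq_degree, max_eq_right hdeg] at hwt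
  exact (hF a b hab).trans hwt

lemma hasCopy_addDom_of_isClique {α V : Type*} [Fintype α] {H : SimpleGraph α} {u : α}
    (hu : ∀ w, ¬ H.Adj u w) {G : SimpleGraph V} {s : Finset V} (hs : G.IsClique (s : Set V))
    (hcard : #s = Fintype.card α) {x y : V} (hx : x ∈ s) (hy : y ∉ s) (hxy : G.Adj x y) :
    hasCopy (addDom H) G := by
  classical
  let e₀ : α ≃ s := Fintype.equivOfCardEq (by rw [Fintype.card_coe, hcard])
  let e : α ≃ s := e₀.trans (Equiv.swap (e₀ u) ⟨x, hx⟩)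
  have heu : e u = ⟨x, hx⟩ := by simp [e]
  have hex : ∀ {w}, w ≠ u → (e w : V) ≠ x := fun hw h =>
    hw (e.injective (Subtype.ext (h.trans (congrArg Subtype.val heu).symm)))
  have hey : ∀ w, (e w : V) ≠ y := fun w h => hy (h ▸ (e w).2)
  have hne : x ≠ y := hxy.ne
  have hadj : ∀ {w}, w ≠ u → G.Adj x (e w) := fun hw => hs hx (e _).2 (hex hw).symm
  -- the dominating vertex goes to `x = e u`, and the isolated vertex `u` moves out to `y`
  let f : Option α → V := fun o => o.elim x fun w => if w = u then y else e w
  refine ⟨⟨f, ?_⟩, ?_⟩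
  · rintro (_ | a) (_ | b) hab
    · exact absurd hab (SimpleGraph.irrefl _)
    · by_cases hb : b = u <;> simp [f, hb, hxy, hadj]
    · by_cases ha : a = u <;> simp [f, ha, hxy.symm, (hadj _).symm]
    · rw [addDom_adj_some_some] at hab
      have ha : a ≠ u := fun h => hu b (h ▸ hab)
      have hb : b ≠ u := fun h => hu a (h ▸ hab.symm)
      simpa [f, ha, hb] using hs (e a).2 (e b).2 (by simpa using hab.ne)
  · rintro (_ | a) (_ | b) h
    · rfl
    · by_cases hb : b = u <;> simp_all [f]
    · by_cases ha : a = u <;> simp_all [f]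
    · by_cases ha : a = u <;> by_cases hb : b = u <;> simp_all [f]

section blockCliques

variable {n k : ℕ}

def blockCliques (n k : ℕ) : SimpleGraph (Fin n) where
  Adj x y := x ≠ y ∧ (x : ℕ) / k = y / k

lemma blockCliques_adj {x y : Fin n} :
    (blockCliques n k).Adj x y ↔ x ≠ y ∧ (x : ℕ) / k = y / k :=
  Iff.rfl

instance : DecidableRel (blockCliques n k).Adj := fun _ _ => inferInstanceAs (Decidable (_ ∧ _))

def blockOf (k : ℕ) (x : Fin n) : Finset (Fin n) := {z | (z : ℕ) / k = x / k}

@[simp]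
lemma mem_blockOf {x z : Fin n} : z ∈ blockOf k x ↔ (z : ℕ) / k = x / k := by
  simp [blockOf]

lemma card_blockOf_le (hk : 0 < k) (x : Fin n) : #(blockOf k x) ≤ k := by
  refine (card_le_card_of_injOn (s := blockOf k x) (t := range k) (fun z => (z : ℕ) % k)
    (fun z _ => mem_range.mpr (Nat.mod_lt _ hk)) fun z hz w hw hzw => Fin.ext ?_).trans_eq
      (card_range k)
  rw [mem_coe, mem_blockOf] at hz hw
  rw [← Nat.div_add_mod z k, ← Nat.div_add_mod w k, hz, hw]
  exact congrArg _ hzw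

lemma card_blockOf_of_lt {x y : Fin n} (hxy : (x : ℕ) / k < y / k) : #(blockOf k x) = k := by
  have hk : 0 < k := Nat.pos_of_ne_zero fun h => by simp [h] at hxy
  have hlt : ∀ j < k, k * (x / k) + j < n := fun j hj => by
    have := Nat.mul_le_mul_left k hxy
    have := Nat.mul_div_le (y : ℕ) k
    have := y.isLt
    rw [Nat.mul_succ] at *
    omega
  refine le_antisymm (card_blockOf_le hk x) ?_
  refine (card_range k).symm.trans_le (card_le_card_of_injOn (s := range k)
    (fun j => if hj : j < k then ⟨_, hlt j hj⟩ else x) (fun j hj => ?_) fun i hi j hj hij => ?_)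
  · rw [mem_coe, mem_range] at hj
    simp [hj, Nat.mul_add_div hk, Nat.div_eq_of_lt hj]
  · rw [mem_coe, mem_range] at hi hj
    simpa [hi, hj] using hij

lemma isClique_blockOf (x : Fin n) : (blockCliques n k).IsClique (blockOf k x : Set (Fin n)) :=
  fun z hz w hw hzw => ⟨hzw, by rw [mem_coe, mem_blockOf] at hz hw; rw [hz, hw]⟩

lemma insert_neighborFinset_blockCliques (v : Fin n) :
    insert v ((blockCliques n k).neighborFinset v) = blockOf k v := by
  ext z
  by_cases hzv : z = v <;> simp [hzv, blockCliques_adj, Ne.symm, eq_comm]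

lemma degree_blockCliques_lt (hk : 0 < k) (v : Fin n) : (blockCliques n k).degree v < k := by
  rw [← card_neighborFinset_eq_degree, Nat.lt_iff_add_one_le,
    ← card_insert_of_notMem (notMem_neighborFinset_self _ v), insert_neighborFinset_blockCliques]
  exact card_blockOf_le hk v

lemma two_mul_card_edgeSet_blockCliques_le (hk : 0 < k) :
    2 * Nat.card (blockCliques n k).edgeSet ≤ (k - 1) * n := by
  rw [Nat.card_eq_fintype_card, ← edgeFinset_card, ← sum_degrees_eq_twice_card_edges]
  calc ∑ v, (blockCliques n k).degree v ≤ ∑ _v : Fin n, (k - 1) :=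
        sum_le_sum fun v _ => Nat.le_sub_one_of_lt (degree_blockCliques_lt hk v)
    _ = (k - 1) * n := by simp [mul_comm]

variable {α : Type*} [Fintype α]

lemma not_hasCopy_addDom_blockCliques [Nonempty α] (H : SimpleGraph α) (n : ℕ) :
    ¬ hasCopy (addDom H) (blockCliques n (Fintype.card α)) := by
  rintro ⟨f, hf⟩
  have hmaps : ∀ o, f o ∈ blockOf (Fintype.card α) (f none) := by
    rintro (_ | w)
    · simp
    · exact mem_blockOf.mpr (f.map_adj (addDom_adj_none_some H w)).2.symm
  have hcard := card_le_card_of_injOn (s := univ) f (fun o _ => hmaps o) hf.injOn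
  rw [card_univ, Fintype.card_option] at hcard
  have := card_blockOf_le (Fintype.card_pos (α := α)) (f none)
  omega

lemma isSat_addDom_blockCliques {H : SimpleGraph α} {u : α} (hu : ∀ w, ¬ H.Adj u w) (n : ℕ) :
    isSat (addDom H) (blockCliques n (Fintype.card α)) := by
  have : Nonempty α := ⟨u⟩
  refine ⟨not_hasCopy_addDom_blockCliques H n, fun x y hxy hnadj => ?_⟩
  suffices ∀ x y : Fin n, (x : ℕ) / Fintype.card α < y / Fintype.card α →
      hasCopy (addDom H) (blockCliques n (Fintype.card α) ⊔ edge x y) by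
    have hne : (x : ℕ) / Fintype.card α ≠ y / Fintype.card α := fun h => hnadj ⟨hxy, h⟩
    rcases hne.lt_or_gt with h | h
    · exact this x y h
    · rw [← edge, edge_comm]
      exact this y x h
  intro x y h
  exact hasCopy_addDom_of_isClique hu ((isClique_blockOf x).mono le_sup_left)
    (card_blockOf_of_lt h) (mem_blockOf.mpr rfl) (fun hy => h.ne (mem_blockOf.mp hy).symm)
    (Or.inr ((edge_adj ..).mpr ⟨Or.inl ⟨rfl, rfl⟩, fun hxy => h.ne (hxy ▸ rfl)⟩))

end blockCliques

lemma satNum_le_of_isSat {α : Type*} {F : SimpleGraph α} {n : ℕ} {G : SimpleGraph (Fin n)}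
    (hG : isSat F G) : satNum F n ≤ Nat.card G.edgeSet :=
  Nat.sInf_le ⟨G, hG, rfl⟩

lemma exists_isSat_card_edgeSet_eq_satNum {α : Type*} {F : SimpleGraph α} {n : ℕ}
    {G : SimpleGraph (Fin n)} (hG : isSat F G) :
    ∃ G' : SimpleGraph (Fin n), isSat F G' ∧ Nat.card G'.edgeSet = satNum F n :=
  Nat.sInf_mem (s := {m | ∃ G : SimpleGraph (Fin n), isSat F G ∧ Nat.card G.edgeSet = m})
    ⟨_, G, hG, rfl⟩

lemma two_mul_satNum_addDom_le {α : Type*} [Fintype α] {H : SimpleGraph α} {u : α}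
    (hu : ∀ w, ¬ H.Adj u w) (n : ℕ) :
    2 * satNum (addDom H) n ≤ (Fintype.card α - 1) * n :=
  (Nat.mul_le_mul_left 2 (satNum_le_of_isSat (isSat_addDom_blockCliques hu n))).trans
    (two_mul_card_edgeSet_blockCliques_le (Fintype.card_pos_iff.mpr ⟨u⟩))

lemma sub_one_mul_le_two_mul_satNum_addDom {α : Type*} [Fintype α] {H : SimpleGraph α} {u : α}
    (hu : ∀ w, ¬ H.Adj u w) (hH : ∀ a b, H.Adj a b → Fintype.card α ≤ edgeWt H a b + 2)
    (n : ℕ) :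
    (Fintype.card α - 1) * n ≤ 2 * satNum (addDom H) n + (Fintype.card α - 1) ^ 2 := by
  obtain ⟨G, hG, hcard⟩ := exists_isSat_card_edgeSet_eq_satNum (isSat_addDom_blockCliques hu n)
  simpa [hcard] using sub_one_mul_card_le_of_isSat (fun _ _ => card_le_edgeWt_addDom H hH) hG

open Filter Topology in
lemma tendsto_div_of_sub_const_le_of_le {a : ℕ → ℝ} {c C : ℝ}
    (hlow : ∀ n : ℕ, c * n - C ≤ a n) (hup : ∀ n : ℕ, a n ≤ c * n) :
    Tendsto (fun n : ℕ => a n / n) atTop (𝓝 c) := by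
  have hC : Tendsto (fun n : ℕ => c - C / n) atTop (𝓝 c) := by
    simpa using tendsto_const_nhds.sub (tendsto_const_div_atTop_nhds_zero_nat C)
  refine tendsto_of_tendsto_of_tendsto_of_le_of_le' hC tendsto_const_nhds ?_ ?_ <;>
    filter_upwards [eventually_ne_atTop 0] with n hn
  · calc c - C / n = (c * n - C) / n := by field_simp
      _ ≤ a n / n := div_le_div_of_nonneg_right (hlow n) n.cast_nonneg
  · calc a n / n ≤ c * n / n := div_le_div_of_nonneg_right (hup n) n.cast_nonneg
      _ = c := by field_simp

/-- If the `k`-vertex graph `H` has an isolated vertex and either no edges or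
`wt(H) > k - 2`, then `sat(H', n) <= ((k-1)/2) n` for all `n >= k + 1`, and
`sat(H', n)/n` tends to `(k-1)/2`, where `H' = H` plus a dominating vertex. -/
theorem stmt10 {α : Type*} [Fintype α] (H : SimpleGraph α) (k : ℕ) (hk : Fintype.card α = k)
    (u : α) (hu : ∀ w, ¬ H.Adj u w)
    (hbig : (∀ a b, ¬ H.Adj a b) ∨ k - 2 < graphWt H) :
    (∀ n : ℕ, k + 1 ≤ n → 2 * satNum (addDom H) n ≤ (k - 1) * n) ∧
      Filter.Tendsto (fun n : ℕ => (satNum (addDom H) n : ℝ) / n) Filter.atTop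
        (nhds (((k : ℝ) - 1) / 2)) := by
  subst hk
  have hH : ∀ a b, H.Adj a b → Fintype.card α ≤ edgeWt H a b + 2 := fun a b hab =>
    hbig.elim (fun h => absurd hab (h a b)) fun h => by
      have : graphWt H ≤ edgeWt H a b := Nat.sInf_le ⟨a, b, hab, rfl⟩
      omega
  have hcast : ((Fintype.card α - 1 : ℕ) : ℝ) = Fintype.card α - 1 :=
    Nat.cast_pred (Fintype.card_pos_iff.mpr ⟨u⟩)
  refine ⟨fun n _ => two_mul_satNum_addDom_le hu n,
    tendsto_div_of_sub_const_le_of_le (C := (Fintype.card α - 1) ^ 2 / 2)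
      (fun n => ?_) fun n => ?_⟩
  · have := (Nat.cast_le (α := ℝ)).mpr (sub_one_mul_le_two_mul_satNum_addDom hu hH n)
    push_cast [hcast] at this
    linarith
  · have := (Nat.cast_le (α := ℝ)).mpr (two_mul_satNum_addDom_le hu n)
    push_cast [hcast] at this
    linarith
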